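/- Let φ : M_n(ℂ) → M_k(ℂ) be completely positive and trace preserving, and let B ∈ M_n(ℂ) be positive definite with φ(B) positive definite. Then the map V : M_k(ℂ) → M_n(ℂ) defined by V(Y) = φ*(Y φ(B)^{-1/2}) B^{1/2} is a contraction with respect to the Hilbert–Schmidt norms. -/

import Mathlib

open Matrix
open scoped ComplexOrder

noncomputable section

abbrev Mat (n : ℕ) := Matrix (Fin n) (Fin n) ℂ

/-- Apply `φ` entrywise to the `n × n` blocks of an `m·n × m·n` matrix. -/
def blockApply {n k : ℕ} (φ : Mat n →ₗ[ℂ] Mat k) (m : ℕ)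
    (M : Matrix (Fin m × Fin n) (Fin m × Fin n) ℂ) :
    Matrix (Fin m × Fin k) (Fin m × Fin k) ℂ :=
  Matrix.of fun p q => φ (Matrix.of fun a b => M (p.1, a) (q.1, b)) p.2 q.2

/-- Complete positivity of a linear map between matrix algebras. -/
def IsCP {n k : ℕ} (φ : Mat n →ₗ[ℂ] Mat k) : Prop :=
  ∀ (m : ℕ) (M : Matrix (Fin m × Fin n) (Fin m × Fin n) ℂ),
    M.PosSemidef → (blockApply φ m M).PosSemidef

/-- Trace preservation. -/
def IsTP {n k : ℕ} (φ : Mat n →ₗ[ℂ] Mat k) : Prop :=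
  ∀ X : Mat n, (φ X).trace = X.trace

/-- The Hilbert–Schmidt adjoint of `φ`, characterized by
`tr (hsAdj φ A * Xᴴ) = tr (A * (φ X)ᴴ)` for all `X`. -/
def hsAdj {n k : ℕ} (φ : Mat n →ₗ[ℂ] Mat k) (A : Mat k) : Mat n :=
  Matrix.of fun i j => (A * (φ (Matrix.single i j 1))ᴴ).trace

open scoped MatrixOrder in
/-- The trace norm `tr |X| = tr ((Xᴴ X)^{1/2})`. -/
def traceNorm {n : ℕ} (X : Mat n) : ℝ :=
  ((CFC.sqrt (Xᴴ * X)).trace).re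


open scoped MatrixOrder in
/-- The positive square root of a positive definite matrix. -/
def sqrtPD {n : ℕ} {B : Mat n} (hB : B.PosDef) : Mat n := CFC.sqrt B

/-- `B^{-1/2}` for a positive definite `B`. -/
def invSqrtPD {n : ℕ} {B : Mat n} (hB : B.PosDef) : Mat n := (sqrtPD hB)⁻¹

open scoped MatrixOrder in
/-- `B^{-1/4}` for a positive definite `B`. -/
def invFourthPD {n : ℕ} {B : Mat n} (hB : B.PosDef) : Mat n :=
  (CFC.sqrt (CFC.sqrt B))⁻¹

/-- The sandwiched 2-Rényi quasi-relative entropy functional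
`S₂(A|B) = tr ((B^{-1/4} A B^{-1/4})²)`. -/
def S2 {n : ℕ} (A : Mat n) {B : Mat n} (hB : B.PosDef) : ℝ :=
  (((invFourthPD hB * A * invFourthPD hB) ^ 2).trace).re

/-- The squared Araki–Masuda weighted 2-norm `‖X‖²_{B,2}`. -/
def wNormSq {n : ℕ} (X : Mat n) {B : Mat n} (hB : B.PosDef) : ℝ :=
  (((invFourthPD hB * X * invFourthPD hB)ᴴ * (invFourthPD hB * X * invFourthPD hB)).trace).re

/-- The Petz recovery map `Y ↦ B^{1/2} φ*(φ(B)^{-1/2} Y φ(B)^{-1/2}) B^{1/2}`. -/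
def petz {n k : ℕ} (φ : Mat n →ₗ[ℂ] Mat k) {B : Mat n} (hB : B.PosDef)
    (hφB : (φ B).PosDef) (Y : Mat k) : Mat n :=
  sqrtPD hB * hsAdj φ (invSqrtPD hφB * Y * invSqrtPD hφB) * sqrtPD hB

/-- Squared Frobenius (Hilbert–Schmidt) norm. -/
def frobSq {n : ℕ} (X : Mat n) : ℝ := ((Xᴴ * X).trace).re


section AuxiliaryLemmas

lemma trace_re_nonneg' {m : Type*} [Fintype m] [DecidableEq m] {M : Matrix m m ℂ}
    (h : M.PosSemidef) : 0 ≤ M.trace.re := by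
  have hd : ∀ i, 0 ≤ M i i := fun i => by
    exact h.diag_nonneg
  rw [Matrix.trace, Complex.re_sum]
  exact Finset.sum_nonneg fun i _ => (Complex.le_def.mp (hd i)).1

lemma trace_re_mono' {m : Type*} [Fintype m] [DecidableEq m] {P R : Matrix m m ℂ}
    (h : (P - R).PosSemidef) : R.trace.re ≤ P.trace.re := by
  have := trace_re_nonneg' h
  rw [Matrix.trace_sub, Complex.sub_re] at this
  linarith

lemma hsAdj_pair {n k : ℕ} (φ : Mat n →ₗ[ℂ] Mat k) (Z : Mat k) (X : Mat n) :
    (hsAdj φ Z * Xᴴ).trace = (Z * (φ X)ᴴ).trace := by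
  conv_rhs => rw [matrix_eq_sum_single X]
  rw [map_sum]
  simp only [map_sum, Matrix.conjTranspose_sum, Finset.mul_sum, Matrix.trace_sum]
  rw [Matrix.trace]
  simp only [Matrix.diag_apply, Matrix.mul_apply, hsAdj, Matrix.of_apply,
    Matrix.conjTranspose_apply, Finset.sum_apply]
  refine Finset.sum_congr rfl fun i _ => Finset.sum_congr rfl fun j _ => ?_
  rw [show Matrix.single i j (X i j) = X i j • Matrix.single i j 1 by
        rw [Matrix.smul_single, smul_eq_mul, mul_one],
      _root_.map_smul, Matrix.conjTranspose_smul, Matrix.mul_smul, Matrix.trace_smul]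
  simp [smul_eq_mul, mul_comm, RCLike.star_def]

/-- The index equivalence used to view a `2m × 2m` block matrix over a product index
as a matrix over a sum index. -/
def e2 (k : ℕ) : Fin k ⊕ Fin k ≃ Fin 2 × Fin k where
  toFun := Sum.elim (fun i => ((0 : Fin 2), i)) (fun i => ((1 : Fin 2), i))
  invFun p := if p.1 = 0 then .inl p.2 else .inr p.2
  left_inv := by rintro (i | i) <;> simp
  right_inv := by rintro ⟨a, i⟩; fin_cases a <;> simp

open scoped MatrixOrder in
lemma cp_schur {n k : ℕ} (φ : Mat n →ₗ[ℂ] Mat k) (hCP : IsCP φ) {B : Mat n}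
    (hB : B.PosSemidef) (hφB : (φ B).PosDef) (Z : Mat n) :
    (φ (Z * B * Zᴴ) - φ (Z * B) * (φ B)⁻¹ * (φ (Z * B))ᴴ).PosSemidef := by
  set G := CFC.sqrt B with hGdef
  have hG : Gᴴ = G := (CFC.sqrt_nonneg B).posSemidef.1
  have hGG : G * G = B := CFC.sqrt_mul_sqrt_self B hB.nonneg
  set Blk : Fin 2 → Mat n := ![Zᴴ, 1] with hBlk
  set L : Matrix (Fin 2 × Fin n) (Fin 2 × Fin n) ℂ :=
    Matrix.of fun p q => if p.1 = 0 then (G * Blk q.1) p.2 q.2 else 0 with hL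
  have hblock : ∀ a b : Fin 2,
      (Matrix.of fun c d => (Lᴴ * L) (a,c) (b,d) : Mat n) = (G * Blk a)ᴴ * (G * Blk b) := by
    intro a b; ext c d
    simp only [Matrix.of_apply, Matrix.mul_apply, Matrix.conjTranspose_apply]
    rw [Fintype.sum_prod_type, Fin.sum_univ_two]
    simp [hL, Matrix.mul_apply, map_sum, _root_.map_mul]
  set N := blockApply φ 2 (Lᴴ * L) with hNdef
  have hN : N.PosSemidef := hCP 2 _ (posSemidef_conjTranspose_mul_self L)
  have hNab : ∀ (a b : Fin 2) (i j : Fin k),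
      N (a,i) (b,j) = φ ((G * Blk a)ᴴ * (G * Blk b)) i j := by
    intro a b i j
    show φ (Matrix.of fun c d => (Lᴴ * L) (a,c) (b,d)) i j = _
    rw [hblock]
  have h00 : (G * Blk 0)ᴴ * (G * Blk 0) = Z * B * Zᴴ := by
    simp [hBlk, Matrix.conjTranspose_mul, hG, Matrix.mul_assoc, ← hGG]
  have h01 : (G * Blk 0)ᴴ * (G * Blk 1) = Z * B := by
    simp [hBlk, Matrix.conjTranspose_mul, hG, Matrix.mul_assoc, ← hGG]
  have h10 : (G * Blk 1)ᴴ * (G * Blk 0) = B * Zᴴ := by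
    simp [hBlk, Matrix.conjTranspose_mul, hG, Matrix.mul_assoc, ← hGG]
  have h11 : (G * Blk 1)ᴴ * (G * Blk 1) = B := by
    simp [hBlk, Matrix.conjTranspose_mul, hG, ← hGG]
  have hherm : φ (B * Zᴴ) = (φ (Z * B))ᴴ := by
    ext i j
    have h1 : N (1,i) (0,j) = φ (B * Zᴴ) i j := by rw [hNab, h10]
    have h2 : N (0,j) (1,i) = φ (Z * B) j i := by rw [hNab, h01]
    have h3 : N (1,i) (0,j) = star (N (0,j) (1,i)) := (hN.1.apply _ _).symm
    rw [Matrix.conjTranspose_apply, ← h2, ← h3, h1]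
  have hsub : (N.submatrix (e2 k) (e2 k)) =
      fromBlocks (φ (Z * B * Zᴴ)) (φ (Z * B)) (φ (Z * B))ᴴ (φ B) := by
    ext p q
    rcases p with i | i <;> rcases q with j | j <;>
      simp only [Matrix.submatrix_apply, e2, Equiv.coe_fn_mk, Sum.elim_inl, Sum.elim_inr,
        Matrix.fromBlocks_apply₁₁, Matrix.fromBlocks_apply₁₂, Matrix.fromBlocks_apply₂₁,
        Matrix.fromBlocks_apply₂₂]
    · rw [hNab, h00]
    · rw [hNab, h01]
    · rw [hNab, h10, hherm]
    · rw [hNab, h11]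
  have hpsd : (N.submatrix (e2 k) (e2 k)).PosSemidef :=
    (posSemidef_submatrix_equiv (e2 k)).mpr hN
  rw [hsub] at hpsd
  haveI := hφB.isUnit.invertible
  exact (PosDef.fromBlocks₂₂ _ _ hφB).mp hpsd

/-- Vectorization of a matrix as an element of a Euclidean space. -/
def vecM {k : ℕ} (X : Mat k) : EuclideanSpace ℂ (Fin k × Fin k) :=
  WithLp.toLp 2 (fun p => X p.1 p.2)

lemma inner_vec {k : ℕ} (X Y : Mat k) :
    (inner ℂ (vecM X) (vecM Y) : ℂ) = (Y * Xᴴ).trace := by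
  rw [Matrix.trace]
  simp only [PiLp.inner_apply, RCLike.inner_apply, vecM, PiLp.toLp_apply,
    Matrix.diag_apply, Matrix.mul_apply, Matrix.conjTranspose_apply]
  rw [Fintype.sum_prod_type]
  exact Finset.sum_congr rfl fun i _ => Finset.sum_congr rfl fun j _ => by
    simp [mul_comm, RCLike.star_def]

lemma norm_vec_sq {k : ℕ} (X : Mat k) : ‖vecM X‖ ^ 2 = frobSq X := by
  rw [frobSq, Matrix.trace_mul_comm, ← inner_vec X X, ← inner_self_eq_norm_sq (𝕜 := ℂ)]
  rfl

end AuxiliaryLemmas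

theorem V_contraction {n k : ℕ} (φ : Mat n →ₗ[ℂ] Mat k)
    (hCP : IsCP φ) (hTP : IsTP φ) {B : Mat n} (hB : B.PosDef)
    (hφB : (φ B).PosDef) (Y : Mat k) :
    frobSq (hsAdj φ (Y * invSqrtPD hφB) * sqrtPD hB) ≤ frobSq Y := by
  set C := invSqrtPD hφB with hCdef
  set G := sqrtPD hB with hGdef
  set A := hsAdj φ (Y * C) with hAdef
  open scoped MatrixOrder in have hGh : Gᴴ = G := (CFC.sqrt_nonneg B).posSemidef.1
  open scoped MatrixOrder in have hGG : G * G = B := CFC.sqrt_mul_sqrt_self B hB.posSemidef.nonneg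
  have hBh : Bᴴ = B := hB.1
  open scoped MatrixOrder in have hCh : Cᴴ = C := ((CFC.sqrt_nonneg (φ B)).posSemidef.1.inv : _)
  have hCC : C * C = (φ B)⁻¹ := by
    open scoped MatrixOrder in rw [hCdef, invSqrtPD, ← Matrix.mul_inv_rev, sqrtPD, CFC.sqrt_mul_sqrt_self (φ B) hφB.posSemidef.nonneg]
  set M := φ (A * B) with hMdef
  have t1 : frobSq (A * G) = ((A * B * Aᴴ).trace).re := by
    rw [frobSq, Matrix.trace_mul_comm, Matrix.conjTranspose_mul, hGh]
    rw [show A * G * (G * Aᴴ) = A * B * Aᴴ by rw [← hGG]; simp [Matrix.mul_assoc]]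
  have t2 : (A * B * Aᴴ).trace = (Y * (M * C)ᴴ).trace := by
    have hp := hsAdj_pair φ (Y * C) (A * B)
    rw [Matrix.conjTranspose_mul, hBh] at hp
    calc (A * B * Aᴴ).trace = (A * (B * Aᴴ)).trace := by rw [Matrix.mul_assoc]
    _ = ((Y * C) * Mᴴ).trace := hp
    _ = (Y * (M * C)ᴴ).trace := by rw [Matrix.conjTranspose_mul, hCh, Matrix.mul_assoc]
  have t4 : frobSq (M * C) ≤ ((A * B * Aᴴ).trace).re := by
    have hkey := cp_schur φ hCP hB.posSemidef hφB A
    have hmono := trace_re_mono' hkey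
    rw [hTP (A * B * Aᴴ)] at hmono
    refine le_trans (le_of_eq ?_) hmono
    rw [frobSq, Matrix.trace_mul_comm, Matrix.conjTranspose_mul, hCh]
    rw [show M * C * (C * Mᴴ) = M * (φ B)⁻¹ * Mᴴ by rw [← hCC]; simp [Matrix.mul_assoc]]
  have t3 : ((A * B * Aᴴ).trace).re ≤ ‖vecM (M * C)‖ * ‖vecM Y‖ := by
    rw [t2, ← inner_vec]
    refine le_trans ?_ (norm_inner_le_norm (𝕜 := ℂ) _ _)
    exact Complex.re_le_norm _
  have ha2 : ‖vecM (M * C)‖ ^ 2 ≤ ((A * B * Aᴴ).trace).re := by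
    rw [norm_vec_sq]; exact t4
  have hb2 : ‖vecM Y‖ ^ 2 = frobSq Y := norm_vec_sq Y
  rw [t1]
  nlinarith [t3, ha2, hb2, sq_nonneg (‖vecM (M * C)‖ - ‖vecM Y‖)]
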